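/- Let n ≥ 2 and let H be an n×n positive semidefinite complex matrix, and define H' = fromBlocks (1 − E₀₀) 0 0 H. If the smallest eigenvalue of H satisfies λ₁(H) ≤ 1/3, then the spectral gap of H' satisfies Δ(H') ≤ 1/3. -/

import Mathlib

open ComplexOrder Matrix

/-- The `i`-th eigenvalue (0-indexed, with multiplicity, in nondecreasing order)
of a Hermitian matrix. -/
noncomputable def sortedEig {N : Type*} [Fintype N] [DecidableEq N]
    {M : Matrix N N ℂ} (hM : M.IsHermitian) (i : ℕ) : ℝ :=
  ((Finset.univ.val.map hM.eigenvalues).sort (· ≤ ·)).getD i 0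

open Polynomial in
lemma herm_charpoly_roots {N : Type*} [Fintype N] [DecidableEq N] {M : Matrix N N ℂ}
    (hM : M.IsHermitian) :
    M.charpoly.roots = (Finset.univ.val.map hM.eigenvalues).map (fun x : ℝ => (x : ℂ)) := by
  classical
  set U : Matrix N N ℂ := (hM.eigenvectorUnitary : Matrix N N ℂ) with hUdef
  have hU1 : U * star U = 1 := (Matrix.mem_unitaryGroup_iff).mp hM.eigenvectorUnitary.2
  set d : N → ℂ := (RCLike.ofReal ∘ hM.eigenvalues) with hddef
  have hspec : M = U * Matrix.diagonal d * star U := hM.spectral_theorem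
  set mc : Matrix N N ℂ →+* Matrix N N ℂ[X] := (C : ℂ →+* ℂ[X]).mapMatrix with hmc
  have hscal : ∀ P : Matrix N N ℂ[X], Matrix.scalar N (X : ℂ[X]) * P = P * Matrix.scalar N X := by
    intro P
    rw [Matrix.scalar_commute X (fun r => Commute.all _ _) P]
  have hdiagchar : charmatrix (Matrix.diagonal d)
      = Matrix.diagonal (fun i => (X : ℂ[X]) - C (d i)) := by
    ext i j
    by_cases h : i = j
    · subst h; simp
    · simp [h, Matrix.diagonal_apply_ne _ h]
  have hchar : charmatrix M = mc U * charmatrix (Matrix.diagonal d) * mc (star U) := by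
    have h1 : charmatrix (Matrix.diagonal d)
        = Matrix.scalar N (X : ℂ[X]) - mc (Matrix.diagonal d) := rfl
    have h2 : charmatrix M = Matrix.scalar N (X : ℂ[X]) - mc M := rfl
    rw [h1, h2, hspec, _root_.map_mul, _root_.map_mul, mul_sub, sub_mul]
    congr 1
    rw [← hscal, mul_assoc, ← _root_.map_mul (f := mc), hU1, _root_.map_one, mul_one]
  have hdet1 : (mc U).det * (mc (star U)).det = 1 := by
    rw [← Matrix.det_mul, ← _root_.map_mul (f := mc), hU1, _root_.map_one, Matrix.det_one]
  have hcp : M.charpoly = (Matrix.diagonal d).charpoly := by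
    unfold Matrix.charpoly
    rw [hchar, Matrix.det_mul, Matrix.det_mul, mul_comm ((mc U).det), mul_assoc, hdet1, mul_one]
  rw [hcp]
  unfold Matrix.charpoly
  rw [hdiagchar, Matrix.det_diagonal]
  have : (∏ i, ((X : ℂ[X]) - C (d i)))
      = ((Finset.univ.val.map d).map (fun a => (X : ℂ[X]) - C a)).prod := by
    rw [Multiset.map_map]; rfl
  rw [this, Polynomial.roots_multiset_prod_X_sub_C, Multiset.map_map]
  rfl

lemma sort_getD_zero_nonneg {s : Multiset ℝ} (h : ∀ x ∈ s, 0 ≤ x) :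
    0 ≤ (s.sort (· ≤ ·)).getD 0 0 := by
  rcases hl : s.sort (· ≤ ·) with _ | ⟨a, t⟩
  · simp
  · have : a ∈ s := by
      rw [← Multiset.mem_sort (r := (· ≤ ·)), hl]; exact List.mem_cons_self
    simpa using h a this

lemma sort_getD_zero_mem {s : Multiset ℝ} (hs : s ≠ 0) : (s.sort (· ≤ ·)).getD 0 0 ∈ s := by
  rcases hl : s.sort (· ≤ ·) with _ | ⟨a, t⟩
  · exfalso
    apply hs
    have := Multiset.sort_eq s (· ≤ ·)
    rw [hl] at this
    simpa using this.symm
  · have : a ∈ s := by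
      rw [← Multiset.mem_sort (r := (· ≤ ·)), hl]; exact List.mem_cons_self
    simpa using this

lemma sort_getD_one_le {s : Multiset ℝ} {c : ℝ}
    (h : 2 ≤ Multiset.countP (fun x => x ≤ c) s) :
    (s.sort (· ≤ ·)).getD 1 0 ≤ c := by
  classical
  have hcount : (s.sort (· ≤ ·)).countP (fun x => decide (x ≤ c))
      = Multiset.countP (fun x => x ≤ c) s := by
    rw [← Multiset.coe_countP, Multiset.sort_eq]
  have hsort : (s.sort (· ≤ ·)).Pairwise (· ≤ ·) := Multiset.pairwise_sort s _
  have hlen : 2 ≤ (s.sort (· ≤ ·)).length :=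
    le_trans (by rw [hcount]; exact h) List.countP_le_length
  rcases hl : s.sort (· ≤ ·) with _ | ⟨a, _ | ⟨b, t⟩⟩
  · rw [hl] at hlen; simp at hlen
  · rw [hl] at hlen; simp at hlen
  · rw [hl] at hcount hsort
    simp only [List.getD, hl]
    by_contra hgt
    push_neg at hgt
    have hbt : (List.countP (fun x => decide (x ≤ c)) (b :: t)) = 0 := by
      rw [List.countP_eq_zero]
      intro x hx
      rcases List.mem_cons.mp hx with rfl | hxt
      · simpa using not_le.mpr hgt
      · have : b ≤ x := (List.pairwise_cons.mp (List.pairwise_cons.mp hsort).2).1 x hxt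
        simpa using not_le.mpr (lt_of_lt_of_le hgt this)
    rw [List.countP_cons, hbt] at hcount
    have : Multiset.countP (fun x => x ≤ c) s ≤ 1 := by
      rw [← hcount]; split <;> simp
    omega

theorem blockHam_gap_yes {n : ℕ} (hn : 2 ≤ n)
    (H : Matrix (Fin n) (Fin n) ℂ) (hH : H.PosSemidef)
    (H' : Matrix (Fin n ⊕ Fin n) (Fin n ⊕ Fin n) ℂ)
    (hHeq : H' = Matrix.fromBlocks
      (1 - Matrix.single (⟨0, by omega⟩ : Fin n) ⟨0, by omega⟩ 1) 0 0 H)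
    (hH'h : H'.IsHermitian)
    (hlow : sortedEig hH.isHermitian 0 ≤ 1/3) :
    sortedEig hH'h 1 - sortedEig hH'h 0 ≤ 1/3 := by
  classical
  have hn0 : 0 < n := by omega
  set z : Fin n := ⟨0, hn0⟩ with hz
  set A : Matrix (Fin n) (Fin n) ℂ := 1 - Matrix.single z z 1 with hAdef
  have hHeq' : H' = Matrix.fromBlocks A 0 0 H := hHeq
  -- A is Hermitian
  have hA : A.IsHermitian := by
    show Aᴴ = A
    rw [hAdef, Matrix.conjTranspose_sub, Matrix.conjTranspose_one]
    congr 1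
    ext i j
    simp [Matrix.single, Matrix.conjTranspose_apply, and_comm]
  -- A is idempotent, hence PSD
  have hAA : A * A = A := by
    have hE : Matrix.single z z (1 : ℂ) * Matrix.single z z 1
        = Matrix.single z z 1 := by
      rw [Matrix.single_mul_single_same, mul_one]
    rw [hAdef, sub_mul, one_mul, mul_sub, mul_one, hE]
    abel
  have hApsd : A.PosSemidef := by
    have h := Matrix.posSemidef_conjTranspose_mul_self A
    rwa [hA, hAA] at h
  -- A has zero determinant, hence a zero eigenvalue
  have hdetA : A.det = 0 := by
    apply Matrix.det_eq_zero_of_row_eq_zero z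
    intro j
    rw [hAdef]
    simp only [Matrix.sub_apply, Matrix.one_apply, Matrix.single]
    by_cases h : z = j <;> simp [h]
  obtain ⟨i0, hi0⟩ : ∃ i, hA.eigenvalues i = 0 := by
    have h := hA.det_eq_prod_eigenvalues
    rw [hdetA] at h
    obtain ⟨i, _, hi⟩ := Finset.prod_eq_zero_iff.mp h.symm
    exact ⟨i, RCLike.ofReal_eq_zero.mp hi⟩
  -- eigenvalue multiset identity
  have hcpbl : H'.charpoly = A.charpoly * H.charpoly := by
    rw [hHeq']; exact Matrix.charpoly_fromBlocks_zero₂₁ A 0 H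
  have hrootsum : H'.charpoly.roots = A.charpoly.roots + H.charpoly.roots := by
    rw [hcpbl]
    exact Polynomial.roots_mul (mul_ne_zero (Matrix.charpoly_monic A).ne_zero
      (Matrix.charpoly_monic H).ne_zero)
  have hmeq : Finset.univ.val.map hH'h.eigenvalues
      = Finset.univ.val.map hA.eigenvalues + Finset.univ.val.map hH.isHermitian.eigenvalues := by
    apply Multiset.map_injective (f := fun x : ℝ => (x : ℂ)) Complex.ofReal_injective
    rw [Multiset.map_add, ← herm_charpoly_roots hA, ← herm_charpoly_roots hH.isHermitian,
      ← herm_charpoly_roots hH'h, hrootsum]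
  set sA := Finset.univ.val.map hA.eigenvalues with hsA
  set sH := Finset.univ.val.map hH.isHermitian.eigenvalues with hsH
  -- lower eigenvalue nonneg
  have h0 : 0 ≤ sortedEig hH'h 0 := by
    apply sort_getD_zero_nonneg
    intro x hx
    rw [hmeq, Multiset.mem_add] at hx
    rcases hx with hx | hx
    · obtain ⟨i, _, rfl⟩ := Multiset.mem_map.mp hx
      exact hApsd.eigenvalues_nonneg i
    · obtain ⟨i, _, rfl⟩ := Multiset.mem_map.mp hx
      exact hH.eigenvalues_nonneg i
  -- second eigenvalue ≤ 1/3
  have h1 : sortedEig hH'h 1 ≤ 1/3 := by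
    apply sort_getD_one_le
    rw [hmeq, Multiset.countP_add]
    have hA1 : 0 < Multiset.countP (fun x => x ≤ (1:ℝ)/3) sA := by
      rw [Multiset.countP_pos]
      exact ⟨hA.eigenvalues i0, Multiset.mem_map_of_mem _ (Finset.mem_univ_val i0),
        by rw [hi0]; norm_num⟩
    have hH1 : 0 < Multiset.countP (fun x => x ≤ (1:ℝ)/3) sH := by
      rw [Multiset.countP_pos]
      refine ⟨sortedEig hH.isHermitian 0, ?_, hlow⟩
      apply sort_getD_zero_mem
      rw [← Multiset.card_pos, hsH, Multiset.card_map]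
      simpa using hn0
    omega
  linarith
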